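/- For each p = 2^n with n ≥ 2, let f : ℤ → {0,1} be the function with f(t) = 1 for t ∈ {1, −1} and for t ≥ 3, and f(t) = 0 for t ∈ {2, −2} and for t ≤ −3 and for t = 0. Then the digraphs C_p and C_p^* on vertex set {1,…,p} with adjacency matrices (f(M_p[i,j])) and (f(M_p^*[i,j])) are non-isomorphic: no bijection π of {1,…,p} satisfies f(M_p[i,j]) = f(M_p^*[π(i), π(j)]) for all i and j. -/
import Mathlib


/-- The matrix `M₄` (1-indexed). -/
def M4 (i j : ℕ) : ℤ :=
  (([[0,1,2,3],[-1,0,3,-2],[-2,-3,0,1],[-3,2,-1,0]] : List (List ℤ)).getD (i-1) []).getD (j-1) 0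

/-- The matrix `M₄*` (1-indexed). -/
def M4s (i j : ℕ) : ℤ :=
  (([[0,-2,-3,-1],[2,0,1,-3],[3,-1,0,2],[1,3,-2,0]] : List (List ℤ)).getD (i-1) []).getD (j-1) 0

/-- For block-index difference `d`, `blockSC d = (s, c)` means that the corresponding
4×4 block of `M_p` is `s·M₄ + c·I` (and the block of `M_p*` is `s·M₄* − c·I`):
`(1,0)` if `d = 0`; `(-1,4)` if `d ≡ 1 (mod 4)`; `(-1,-4)` if `d ≡ -1 (mod 4)`;
`(1, x+4)` if `d = y·2^x`, `x ≥ 1`, `y ≡ 1 (mod 4)`;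
`(1, -(x+4))` if `d = y·2^x`, `x ≥ 1`, `y ≡ -1 (mod 4)`. -/
def blockSC (d : ℤ) : ℤ × ℤ :=
  if d = 0 then (1, 0)
  else if d % 4 = 1 then (-1, 4)
  else if d % 4 = 3 then (-1, -4)
  else
    let x : ℕ := d.natAbs.factorization 2
    if (d / (2:ℤ)^x) % 4 = 1 then (1, (x:ℤ) + 4) else (1, -((x:ℤ) + 4))

/-- Entry `(i,j)` (1-indexed) of `M_p`, for any `p = 2^n ≥ 4` and `1 ≤ i,j ≤ p`;
the defining block formula depends only on `i` and `j`, not on `p`. -/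
def Ment (i j : ℕ) : ℤ :=
  let d : ℤ := (((j-1)/4 : ℕ) : ℤ) - (((i-1)/4 : ℕ) : ℤ)
  (blockSC d).1 * M4 ((i-1) % 4 + 1) ((j-1) % 4 + 1)
    + (if (i-1) % 4 = (j-1) % 4 then (blockSC d).2 else 0)

/-- Entry `(i,j)` (1-indexed) of `M_p*`. -/
def Ments (i j : ℕ) : ℤ :=
  let d : ℤ := (((j-1)/4 : ℕ) : ℤ) - (((i-1)/4 : ℕ) : ℤ)
  (blockSC d).1 * M4s ((i-1) % 4 + 1) ((j-1) % 4 + 1)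
    + (if (i-1) % 4 = (j-1) % 4 then -(blockSC d).2 else 0)

/-- The `p × p` matrix `M_p`, `p = 2^n`, as a function on 1-based indices
(entries outside the index range `1,…,p` are set to `0`). -/
def Mp (n i j : ℕ) : ℤ :=
  if 1 ≤ i ∧ i ≤ 2^n ∧ 1 ≤ j ∧ j ≤ 2^n then Ment i j else 0

/-- The `p × p` matrix `M_p*`, `p = 2^n`, as a function on 1-based indices. -/
def Mps (n i j : ℕ) : ℤ :=
  if 1 ≤ i ∧ i ≤ 2^n ∧ 1 ≤ j ∧ j ≤ 2^n then Ments i j else 0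

/-- The base mappings `σ_{4,k}` : `sigma4 k i = σ_{4,k}(i)` (value `0` at the
undefined point `i = k`). -/
def sigma4 (k i : ℕ) : ℕ :=
  (([[0,4,2,3],[3,0,4,1],[4,1,0,2],[2,3,1,0]] : List (List ℕ)).getD (k-1) []).getD (i-1) 0

/-- The mappings `σ_{p,k}` for `p = 2^n`: `sigma n k i = σ_{2^n, k}(i)`
(value `0` at the undefined point `i = k`, and junk values for `n < 2`). -/
def sigma : ℕ → ℕ → ℕ → ℕ
  | 0, _, _ => 0
  | 1, _, _ => 0
  | 2, k, i => sigma4 k i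
  | n+3, k, i =>
    let P := 2^(n+2)
    if k ≤ P then
      if i = k + P then i
      else if i ≤ P then sigma (n+2) k i + P
      else sigma (n+2) k (i - P)
    else
      if i = k - P then i
      else if i ≤ P then sigma (n+2) (k - P) i + P
      else sigma (n+2) (k - P) (i - P)

lemma blockSC_fst (d : ℤ) : (blockSC d).1 = if 2 ∣ d then 1 else -1 := by
  simp only [blockSC]
  split_ifs with h0 h1 h3 hq <;> simp_all <;> omega

lemma blockSC_snd_abs (d : ℤ) (hd : d ≠ 0) : 4 ≤ |(blockSC d).2| := by
  have hx : (0:ℤ) ≤ (d.natAbs.factorization 2 : ℤ) := by positivity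
  simp only [blockSC]
  split_ifs with h0 h1 h3 hq
  · exact absurd h0 hd
  · decide
  · decide
  · rw [abs_of_nonneg (by omega)]; omega
  · rw [abs_of_nonpos (by omega)]; omega

lemma two_pow_fact_dvd (d : ℤ) : ((2:ℤ)^(d.natAbs.factorization 2)) ∣ d := by
  rcases eq_or_ne d 0 with rfl | hd
  · simp
  · have h : (2:ℕ)^(d.natAbs.factorization 2) ∣ d.natAbs := Nat.ordProj_dvd d.natAbs 2
    have h2 : ((2:ℤ))^(d.natAbs.factorization 2) ∣ (d.natAbs : ℤ) := by exact_mod_cast h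
    exact Int.dvd_natAbs.mp h2

lemma quot_odd (d : ℤ) (hd : d ≠ 0) : ¬ (2 ∣ (d / 2^(d.natAbs.factorization 2))) := by
  set x := d.natAbs.factorization 2 with hx
  rintro ⟨k, hk⟩
  obtain ⟨q, hq⟩ := two_pow_fact_dvd d
  have h2x : ((2:ℤ)^x) ≠ 0 := by positivity
  have hqk : q = 2 * k := by
    rw [hq, Int.mul_ediv_cancel_left _ h2x] at hk; exact hk
  have hdvd : (2:ℤ)^(x+1) ∣ d := ⟨k, by rw [hq, hqk]; ring⟩
  have hn : (2:ℕ)^(x+1) ∣ d.natAbs := by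
    have := Int.natAbs_dvd_natAbs.mpr hdvd
    simpa [Int.natAbs_pow] using this
  exact Nat.pow_succ_factorization_not_dvd (Int.natAbs_ne_zero.mpr hd) Nat.prime_two hn

lemma blockSC_snd_neg (d : ℤ) : (blockSC (-d)).2 = -(blockSC d).2 := by
  rcases eq_or_ne d 0 with rfl | hd
  · simp [blockSC]
  rcases Int.even_or_odd d with he | ho
  · have hd4 : d % 4 = 0 ∨ d % 4 = 2 := by
      obtain ⟨k, hk⟩ := he; omega
    set x := d.natAbs.factorization 2 with hxdef
    obtain ⟨q, hq⟩ := two_pow_fact_dvd d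
    have h2x : ((2:ℤ)^x) ≠ 0 := by positivity
    have hdq : d / 2^x = q := by rw [hq, Int.mul_ediv_cancel_left _ h2x]
    have hndq : (-d) / 2^x = -q := by rw [hq, ← mul_neg, Int.mul_ediv_cancel_left _ h2x]
    have hqodd : ¬ (2 ∣ q) := by have := quot_odd d hd; rwa [hdq] at this
    have hq4 : q % 4 = 1 ∨ q % 4 = 3 := by omega
    have hext : (-d).natAbs = d.natAbs := Int.natAbs_neg d
    simp only [blockSC, hext, ← hxdef, hdq, hndq]
    rw [if_neg hd, if_neg (by omega : ¬ d % 4 = 1), if_neg (by omega : ¬ d % 4 = 3),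
        if_neg (by omega : ¬ (-d) = 0), if_neg (by omega : ¬ (-d) % 4 = 1),
        if_neg (by omega : ¬ (-d) % 4 = 3)]
    rcases hq4 with h1 | h1
    · rw [if_pos h1, if_neg (by omega : ¬ (-q) % 4 = 1)]
    · rw [if_neg (by omega : ¬ q % 4 = 1), if_pos (by omega : (-q) % 4 = 1)]
      simp
  · obtain ⟨k, hk⟩ := ho
    have h4 : d % 4 = 1 ∨ d % 4 = 3 := by omega
    rcases h4 with h | h
    · have h' : (-d) % 4 = 3 := by omega
      simp [blockSC, hd, neg_eq_zero, h, h', show ¬ ((-d) % 4 = 1) by omega]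
    · have h' : (-d) % 4 = 1 := by omega
      simp [blockSC, hd, neg_eq_zero, h, h', show ¬ (d % 4 = 1) by omega]

/-- the sign of the entry -/
abbrev Ep (t : ℤ) : Prop := t = 1 ∨ t = -1 ∨ 3 ≤ t

/-- the intra-block-class tournament -/
def S (d : ℤ) : Prop := 0 < (blockSC d).2

lemma S_zero : ¬ S 0 := by simp [S, blockSC]

lemma blockSC_snd_big (d : ℤ) (hd : d ≠ 0) :
    4 ≤ (blockSC d).2 ∨ (blockSC d).2 ≤ -4 := by
  have := blockSC_snd_abs d hd
  rcases abs_cases (blockSC d).2 with ⟨h, _⟩ | ⟨h, _⟩ <;> omega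

lemma S_tourn (d : ℤ) (hd : d ≠ 0) : S (-d) ↔ ¬ S d := by
  have h1 := blockSC_snd_neg d
  have h2 := blockSC_snd_big d hd
  simp only [S, h1]
  omega

lemma Ment_eq (b b' c c' : ℕ) (hc : c < 4) (hc' : c' < 4) :
    Ment (4*b+c+1) (4*b'+c'+1) = (blockSC ((b':ℤ)-(b:ℤ))).1 * M4 (c+1) (c'+1)
      + (if c = c' then (blockSC ((b':ℤ)-(b:ℤ))).2 else 0) := by
  have h1 : (4*b+c+1-1) % 4 = c := by omega
  have h2 : (4*b+c+1-1) / 4 = b := by omega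
  have h3 : (4*b'+c'+1-1) % 4 = c' := by omega
  have h4 : (4*b'+c'+1-1) / 4 = b' := by omega
  simp only [Ment, h1, h2, h3, h4]

lemma Ments_eq (b b' c c' : ℕ) (hc : c < 4) (hc' : c' < 4) :
    Ments (4*b+c+1) (4*b'+c'+1) = (blockSC ((b':ℤ)-(b:ℤ))).1 * M4s (c+1) (c'+1)
      + (if c = c' then -(blockSC ((b':ℤ)-(b:ℤ))).2 else 0) := by
  have h1 : (4*b+c+1-1) % 4 = c := by omega
  have h2 : (4*b+c+1-1) / 4 = b := by omega
  have h3 : (4*b'+c'+1-1) % 4 = c' := by omega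
  have h4 : (4*b'+c'+1-1) / 4 = b' := by omega
  simp only [Ments, h1, h2, h3, h4]

lemma sgn_cases (d : ℤ) : (blockSC d).1 = 1 ∨ (blockSC d).1 = -1 := by
  rw [blockSC_fst]; split_ifs <;> simp

/-- intra-class adjacency in C_p -/
lemma L_intra (b b' c : ℕ) (hc : c < 4) :
    Ep (Ment (4*b+c+1) (4*b'+c+1)) ↔ S ((b':ℤ)-(b:ℤ)) := by
  rw [Ment_eq b b' c c hc hc, if_pos rfl]
  have hm : M4 (c+1) (c+1) = 0 := by interval_cases c <;> decide
  rw [hm, mul_zero, zero_add]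
  rcases eq_or_ne b b' with rfl | hne
  · simp [blockSC, S, Ep]
  · have h : ((b':ℤ)-(b:ℤ)) ≠ 0 := by omega
    have := blockSC_snd_big _ h
    simp only [S, Ep]; omega

/-- intra-class adjacency in C_p* -/
lemma L_intras (b b' c : ℕ) (hc : c < 4) :
    Ep (Ments (4*b+c+1) (4*b'+c+1)) ↔ S ((b:ℤ)-(b':ℤ)) := by
  rw [Ments_eq b b' c c hc hc, if_pos rfl]
  have hm : M4s (c+1) (c+1) = 0 := by interval_cases c <;> decide
  rw [hm, mul_zero, zero_add]
  have hneg : (blockSC ((b:ℤ)-(b':ℤ))).2 = -(blockSC ((b':ℤ)-(b:ℤ))).2 := by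
    rw [show (b:ℤ)-(b':ℤ) = -((b':ℤ)-(b:ℤ)) by ring, blockSC_snd_neg]
  rcases eq_or_ne b b' with rfl | hne
  · simp [blockSC, S, Ep]
  · have h : ((b':ℤ)-(b:ℤ)) ≠ 0 := by omega
    have := blockSC_snd_big _ h
    simp only [S, Ep, hneg]; omega
@[simp] lemma M4_v11 : M4 1 1 = (0 : ℤ) := by decide
@[simp] lemma M4_v12 : M4 1 2 = (1 : ℤ) := by decide
@[simp] lemma M4_v13 : M4 1 3 = (2 : ℤ) := by decide
@[simp] lemma M4_v14 : M4 1 4 = (3 : ℤ) := by decide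
@[simp] lemma M4_v21 : M4 2 1 = (-1 : ℤ) := by decide
@[simp] lemma M4_v22 : M4 2 2 = (0 : ℤ) := by decide
@[simp] lemma M4_v23 : M4 2 3 = (3 : ℤ) := by decide
@[simp] lemma M4_v24 : M4 2 4 = (-2 : ℤ) := by decide
@[simp] lemma M4_v31 : M4 3 1 = (-2 : ℤ) := by decide
@[simp] lemma M4_v32 : M4 3 2 = (-3 : ℤ) := by decide
@[simp] lemma M4_v33 : M4 3 3 = (0 : ℤ) := by decide
@[simp] lemma M4_v34 : M4 3 4 = (1 : ℤ) := by decide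
@[simp] lemma M4_v41 : M4 4 1 = (-3 : ℤ) := by decide
@[simp] lemma M4_v42 : M4 4 2 = (2 : ℤ) := by decide
@[simp] lemma M4_v43 : M4 4 3 = (-1 : ℤ) := by decide
@[simp] lemma M4_v44 : M4 4 4 = (0 : ℤ) := by decide
@[simp] lemma M4s_v11 : M4s 1 1 = (0 : ℤ) := by decide
@[simp] lemma M4s_v12 : M4s 1 2 = (-2 : ℤ) := by decide
@[simp] lemma M4s_v13 : M4s 1 3 = (-3 : ℤ) := by decide
@[simp] lemma M4s_v14 : M4s 1 4 = (-1 : ℤ) := by decide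
@[simp] lemma M4s_v21 : M4s 2 1 = (2 : ℤ) := by decide
@[simp] lemma M4s_v22 : M4s 2 2 = (0 : ℤ) := by decide
@[simp] lemma M4s_v23 : M4s 2 3 = (1 : ℤ) := by decide
@[simp] lemma M4s_v24 : M4s 2 4 = (-3 : ℤ) := by decide
@[simp] lemma M4s_v31 : M4s 3 1 = (3 : ℤ) := by decide
@[simp] lemma M4s_v32 : M4s 3 2 = (-1 : ℤ) := by decide
@[simp] lemma M4s_v33 : M4s 3 3 = (0 : ℤ) := by decide
@[simp] lemma M4s_v34 : M4s 3 4 = (2 : ℤ) := by decide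
@[simp] lemma M4s_v41 : M4s 4 1 = (1 : ℤ) := by decide
@[simp] lemma M4s_v42 : M4s 4 2 = (3 : ℤ) := by decide
@[simp] lemma M4s_v43 : M4s 4 3 = (-2 : ℤ) := by decide
@[simp] lemma M4s_v44 : M4s 4 4 = (0 : ℤ) := by decide

lemma Ep_helper (d v : ℤ) :
    Ep ((blockSC d).1 * v) ↔ (v = 1 ∨ v = -1 ∨ (3 ≤ v ∧ 2 ∣ d) ∨ (v ≤ -3 ∧ ¬ 2 ∣ d)) := by
  rw [blockSC_fst]; split_ifs with h <;> simp only [Ep, one_mul, neg_one_mul] <;> omega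

lemma L_digP (b b' c c' : ℕ) (hc : c < 4) (hc' : c' < 4) (hne : c ≠ c') (hh : c/2 = c'/2) :
    Ep (Ment (4*b+c+1) (4*b'+c'+1)) := by
  rw [Ment_eq b b' c c' hc hc', if_neg hne, add_zero, Ep_helper]
  interval_cases c <;> interval_cases c' <;> simp_all

lemma L_noadjP (b b' c c' : ℕ) (hc : c < 4) (hc' : c' < 4) (hne : c ≠ c') (hh : c % 2 = c' % 2) :
    ¬ Ep (Ment (4*b+c+1) (4*b'+c'+1)) := by
  rw [Ment_eq b b' c c' hc hc', if_neg hne, add_zero, Ep_helper]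
  interval_cases c <;> interval_cases c' <;> simp_all

lemma L_digsS (b b' c c' : ℕ) (h3 : c + c' = 3) :
    Ep (Ments (4*b+c+1) (4*b'+c'+1)) := by
  have hc : c < 4 := by omega
  have hc' : c' < 4 := by omega
  rw [Ments_eq b b' c c' hc hc', if_neg (by omega), add_zero, Ep_helper]
  interval_cases c <;> interval_cases c' <;> simp_all

lemma L_nodigs (b b' c c' : ℕ) (hc : c < 4) (hc' : c' < 4) (h3 : c + c' ≠ 3) :
    ¬ (Ep (Ments (4*b+c+1) (4*b'+c'+1)) ∧ Ep (Ments (4*b'+c'+1) (4*b+c+1))) := by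
  rintro ⟨h1, h2⟩
  rcases eq_or_ne c c' with rfl | hne
  · rw [L_intras b b' c hc] at h1
    rw [L_intras b' b c hc] at h2
    rcases eq_or_ne b b' with rfl | hbne
    · exact S_zero (by simpa using h1)
    · have hd : ((b':ℤ)-(b:ℤ)) ≠ 0 := by omega
      have := S_tourn _ hd
      rw [show -((b':ℤ)-(b:ℤ)) = (b:ℤ)-(b':ℤ) by ring] at this
      rw [this] at h1
      exact h1 h2
  · rw [Ments_eq b b' c c' hc hc', if_neg hne, add_zero, Ep_helper] at h1
    rw [Ments_eq b' b c' c hc' hc, if_neg (Ne.symm hne), add_zero, Ep_helper] at h2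
    interval_cases c <;> interval_cases c' <;> simp_all <;> omega

lemma L_adjs_res (b b' c c' : ℕ) (hc : c < 4) (hc' : c' < 4)
    (h : Ep (Ments (4*b+c+1) (4*b'+c'+1))) : c % 2 = c' % 2 ∨ c + c' = 3 := by
  rcases eq_or_ne c c' with rfl | hne
  · left; rfl
  · rw [Ments_eq b b' c c' hc hc', if_neg hne, add_zero, Ep_helper] at h
    interval_cases c <;> interval_cases c' <;> simp_all <;> omega

lemma L_crossP (b b' c : ℕ) (hc : c < 2) :
    Ep (Ment (4*b+c+1) (4*b'+(3-c)+1)) ↔ 2 ∣ ((b':ℤ)-(b:ℤ)) := by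
  rw [Ment_eq b b' c (3-c) (by omega) (by omega), if_neg (by omega), add_zero, Ep_helper]
  interval_cases c <;> simp_all <;> omega

lemma L_crossP_rev (b b' c : ℕ) (hc : c < 2) :
    Ep (Ment (4*b+(3-c)+1) (4*b'+c+1)) ↔ ¬ 2 ∣ ((b':ℤ)-(b:ℤ)) := by
  rw [Ment_eq b b' (3-c) c (by omega) (by omega), if_neg (by omega), add_zero, Ep_helper]
  interval_cases c <;> simp_all <;> omega

lemma L_crosss (b b' a : ℕ) (ha : a < 2) :
    Ep (Ments (4*b+a+1) (4*b'+(a+2)+1)) ↔ ¬ 2 ∣ ((b':ℤ)-(b:ℤ)) := by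
  rw [Ments_eq b b' a (a+2) (by omega) (by omega), if_neg (by omega), add_zero, Ep_helper]
  interval_cases a <;> simp_all <;> omega

section MainHelpers

lemma surj_of_inj (m : ℕ) (φ : ℕ → ℕ) (hlt : ∀ b < m, φ b < m)
    (hinj : ∀ b < m, ∀ b' < m, φ b = φ b' → b = b') :
    ∀ y < m, ∃ b < m, φ b = y := by
  intro y hy
  have := Finset.surj_on_of_inj_on_of_card_le (s := Finset.range m) (t := Finset.range m)
    (f := fun b _ => φ b) (fun b hb => Finset.mem_range.2 (hlt b (Finset.mem_range.1 hb)))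
    (fun a₁ a₂ h1 h2 he => hinj _ (Finset.mem_range.1 h1) _ (Finset.mem_range.1 h2) he) le_rfl
    y (Finset.mem_range.2 hy)
  obtain ⟨b, hb, he⟩ := this
  exact ⟨b, Finset.mem_range.1 hb, he.symm⟩

/-- A tournament on `{0,…,m-1}` has no automorphism moving every point across parity. -/
lemma no_parity_flip_auto (m : ℕ) (hm0 : 0 < m) (θ : ℕ → ℕ)
    (hlt : ∀ x < m, θ x < m)
    (hinj : ∀ x < m, ∀ y < m, θ x = θ y → x = y)
    (hpar : ∀ x < m, ¬ (2:ℤ) ∣ ((θ x : ℤ) - (x : ℤ)))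
    (haut : ∀ x < m, ∀ y < m, (S ((y:ℤ)-(x:ℤ)) ↔ S ((θ y : ℤ) - (θ x : ℤ)))) : False := by
  have it_lt : ∀ k, ∀ x < m, θ^[k] x < m := by
    intro k
    induction k with
    | zero => intro x hx; simpa using hx
    | succ k ih =>
      intro x hx
      rw [Function.iterate_succ_apply']
      exact hlt _ (ih x hx)
  have it_par : ∀ k, ∀ x < m, (2:ℤ) ∣ ((θ^[k] x : ℤ) - (x:ℤ) - (k:ℤ)) := by
    intro k
    induction k with
    | zero => intro x hx; simp
    | succ k ih =>
      intro x hx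
      rw [Function.iterate_succ_apply']
      have h1 := ih x hx
      have h2 := hpar _ (it_lt k x hx)
      push_cast
      push_cast at h1
      omega
  have it_aut : ∀ k, ∀ x < m, ∀ y < m,
      (S ((y:ℤ)-(x:ℤ)) ↔ S ((θ^[k] y : ℤ) - (θ^[k] x : ℤ))) := by
    intro k
    induction k with
    | zero => intro x hx y hy; simp
    | succ k ih =>
      intro x hx y hy
      rw [Function.iterate_succ_apply', Function.iterate_succ_apply']
      exact (ih x hx y hy).trans (haut _ (it_lt k x hx) _ (it_lt k y hy))
  have it_inj : ∀ k, ∀ x < m, ∀ y < m, θ^[k] x = θ^[k] y → x = y := by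
    intro k
    induction k with
    | zero => intro x _ y _ h; simpa using h
    | succ k ih =>
      intro x hx y hy h
      rw [Function.iterate_succ_apply', Function.iterate_succ_apply'] at h
      exact ih x hx y hy (hinj _ (it_lt k x hx) _ (it_lt k y hy) h)
  -- pigeonhole : some positive K with θ^[K] 0 = 0
  have hex : ∃ K, 0 < K ∧ θ^[K] 0 = 0 := by
    obtain ⟨k, hk, l, hl, hne, heq⟩ :=
      Finset.exists_ne_map_eq_of_card_lt_of_maps_to
        (s := Finset.range (m+1)) (t := Finset.range m)
        (by simp) (fun k _ => Finset.mem_range.2 (it_lt k 0 hm0))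
    rw [Finset.mem_range] at hk hl
    rcases Nat.lt_or_ge k l with hkl | hkl
    · refine ⟨l - k, by omega, ?_⟩
      have : θ^[k] (θ^[l-k] 0) = θ^[k] 0 := by
        rw [← Function.iterate_add_apply, show k + (l-k) = l by omega, heq]
      exact it_inj k _ (it_lt _ 0 hm0) _ hm0 this
    · have hkl' : l < k := by omega
      refine ⟨k - l, by omega, ?_⟩
      have : θ^[l] (θ^[k-l] 0) = θ^[l] 0 := by
        rw [← Function.iterate_add_apply, show l + (k-l) = k by omega, ← heq]
      exact it_inj l _ (it_lt _ 0 hm0) _ hm0 this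
  classical
  set K := Nat.find hex with hKdef
  obtain ⟨hK0, hKfix⟩ := Nat.find_spec hex
  have hKmin : ∀ j, j < K → ¬ (0 < j ∧ θ^[j] 0 = 0) := fun j hj => Nat.find_min hex hj
  have hKeven : 2 ∣ K := by
    have := it_par K 0 hm0
    rw [hKfix] at this
    omega
  set h := K / 2 with hhdef
  have hh1 : 0 < h := by omega
  have hh2 : h < K := by omega
  set a := θ^[h] 0 with hadef
  have ham : a < m := it_lt h 0 hm0
  have hane : a ≠ 0 := by
    intro h0
    exact hKmin h hh2 ⟨hh1, by rw [← hadef, h0]⟩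
  have hret : θ^[h] a = 0 := by
    rw [hadef, ← Function.iterate_add_apply, show h + h = K by omega, hKfix]
  have key := it_aut h 0 hm0 a ham
  rw [hret, ← hadef] at key
  have hz : ((a:ℤ)) ≠ 0 := by exact_mod_cast hane
  have ht := S_tourn (a:ℤ) hz
  have e1 : ((a:ℤ)) - ((0:ℕ):ℤ) = (a:ℤ) := by push_cast; ring
  have e2 : (((0:ℕ)):ℤ) - (a:ℤ) = -(a:ℤ) := by push_cast; ring
  rw [e1, e2] at key
  exact (em (S ((a:ℕ):ℤ))).elim (fun hS => ht.mp (key.mp hS) hS)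
    (fun hS => hS (key.mpr (ht.mpr hS)))

end MainHelpers


/-- For each `p = 2^n` with `n ≥ 2`, let `f : ℤ → {0,1}` send
`1, −1` and all `t ≥ 3` to `1`, and `2, −2`, all `t ≤ −3`, and `0` to `0`. Then the
digraphs `C_p`, `C_p*` with adjacency matrices `(f(M_p[i,j]))`, `(f(M_p*[i,j]))`
are non-isomorphic. -/
theorem stmt19 (n p : ℕ) (hn : 2 ≤ n) (hp : p = 2^n) :
    let f : ℤ → Fin 2 := fun t => if t = 1 ∨ t = -1 ∨ 3 ≤ t then 1 else 0
    ¬ ∃ π : ℕ → ℕ, Set.BijOn π (Set.Icc 1 p) (Set.Icc 1 p) ∧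
      ∀ i ∈ Set.Icc 1 p, ∀ j ∈ Set.Icc 1 p,
        f (Mp n i j) = f (Mps n (π i) (π j)) := by
  intro f
  rintro ⟨π, hbij, hpres⟩
  obtain ⟨m, hmdef⟩ : ∃ m, 2^(n-2) = m := ⟨_, rfl⟩
  have hpm : p = 4 * m := by
    have h3 : (2:ℕ)^n = 4 * 2^(n-2) := by
      conv_lhs => rw [show n = (n-2)+2 by omega]
      rw [pow_add]; ring
    rw [hp, h3, hmdef]
  have hm0 : 0 < m := by
    rw [← hmdef]
    positivity
  have hmem : ∀ b c : ℕ, b < m → c < 4 → (4*b+c+1) ∈ Set.Icc 1 p := by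
    intro b c hb hc
    rw [Set.mem_Icc]
    omega
  have hdec : ∀ i ∈ Set.Icc 1 p, ∃ b c, b < m ∧ c < 4 ∧ i = 4*b+c+1 := by
    intro i hi
    rw [Set.mem_Icc] at hi
    exact ⟨(i-1)/4, (i-1)%4, by omega, by omega, by omega⟩
  have hfE : ∀ s t : ℤ, f s = f t → (Ep s ↔ Ep t) := by
    intro s t h
    have h' : (if Ep s then (1 : Fin 2) else 0) = (if Ep t then (1 : Fin 2) else 0) := h
    by_cases hs : Ep s <;> by_cases ht : Ep t
    · tauto
    · rw [if_pos hs, if_neg ht] at h'; exact absurd h' (by decide)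
    · rw [if_neg hs, if_pos ht] at h'; exact absurd h' (by decide)
    · tauto
  have hE : ∀ b c b' c', b < m → c < 4 → b' < m → c' < 4 →
      (Ep (Ment (4*b+c+1) (4*b'+c'+1)) ↔ Ep (Ments (π (4*b+c+1)) (π (4*b'+c'+1)))) := by
    intro b c b' c' hb hc hb' hc'
    have hi := hmem b c hb hc
    have hj := hmem b' c' hb' hc'
    have h := hpres _ hi _ hj
    have hi' := hbij.mapsTo hi
    have hj' := hbij.mapsTo hj
    rw [Set.mem_Icc] at hi hj hi' hj'
    have hMp : Mp n (4*b+c+1) (4*b'+c'+1) = Ment (4*b+c+1) (4*b'+c'+1) := by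
      rw [Mp, if_pos (by omega)]
    have hMps : Mps n (π (4*b+c+1)) (π (4*b'+c'+1)) = Ments (π (4*b+c+1)) (π (4*b'+c'+1)) := by
      rw [Mps, if_pos (by omega)]
    rw [hMp, hMps] at h
    exact hfE _ _ h
  -- Step 1 : π respects residue classes
  have hres : ∀ b b' c, b < m → b' < m → c < 4 →
      (π (4*b+c+1) - 1) % 4 = (π (4*b'+c+1) - 1) % 4 := by
    intro b b' c hb hb' hc
    obtain ⟨e, he4, hne, hh⟩ : ∃ e, e < 4 ∧ e ≠ c ∧ e/2 = c/2 :=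
      ⟨if c % 2 = 0 then c+1 else c-1, by split_ifs <;> omega, by split_ifs <;> omega,
        by split_ifs <;> omega⟩
    obtain ⟨bu, cu, hbu, hcu, hu⟩ := hdec (π (4*b+c+1)) (hbij.mapsTo (hmem b c hb hc))
    obtain ⟨bv, cv, hbv, hcv, hv⟩ := hdec (π (4*b'+c+1)) (hbij.mapsTo (hmem b' c hb' hc))
    obtain ⟨bw, cw, hbw, hcw, hw⟩ := hdec (π (4*0+e+1)) (hbij.mapsTo (hmem 0 e hm0 he4))
    have h1 : Ep (Ments (π (4*b+c+1)) (π (4*0+e+1))) :=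
      (hE b c 0 e hb hc hm0 he4).mp (L_digP b 0 c e hc he4 (Ne.symm hne) hh.symm)
    have h2 : Ep (Ments (π (4*0+e+1)) (π (4*b+c+1))) :=
      (hE 0 e b c hm0 he4 hb hc).mp (L_digP 0 b e c he4 hc hne hh)
    have h3 : Ep (Ments (π (4*b'+c+1)) (π (4*0+e+1))) :=
      (hE b' c 0 e hb' hc hm0 he4).mp (L_digP b' 0 c e hc he4 (Ne.symm hne) hh.symm)
    have h4 : Ep (Ments (π (4*0+e+1)) (π (4*b'+c+1))) :=
      (hE 0 e b' c hm0 he4 hb' hc).mp (L_digP 0 b' e c he4 hc hne hh)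
    rw [hu, hw] at h1 h2
    rw [hv, hw] at h3 h4
    have hsum : cu + cw = 3 := by
      by_contra hno
      exact L_nodigs bu bw cu cw hcu hcw hno ⟨h1, h2⟩
    have hsum' : cv + cw = 3 := by
      by_contra hno
      exact L_nodigs bv bw cv cw hcv hcw hno ⟨h3, h4⟩
    rw [hu, hv]
    omega
  -- Step 2 : fix a class c ∈ {0,1} whose image class a is in {0,1}
  obtain ⟨b1, a1, hb1, ha1, hu1⟩ := hdec (π (4*0+0+1)) (hbij.mapsTo (hmem 0 0 hm0 (by norm_num)))
  obtain ⟨b2, a2, hb2, ha2, hu2⟩ := hdec (π (4*0+1+1)) (hbij.mapsTo (hmem 0 1 hm0 (by norm_num)))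
  have h12 : Ep (Ments (π (4*0+0+1)) (π (4*0+1+1))) :=
    (hE 0 0 0 1 hm0 (by norm_num) hm0 (by norm_num)).mp
      (L_digP 0 0 0 1 (by norm_num) (by norm_num) (by omega) (by omega))
  have h21 : Ep (Ments (π (4*0+1+1)) (π (4*0+0+1))) :=
    (hE 0 1 0 0 hm0 (by norm_num) hm0 (by norm_num)).mp
      (L_digP 0 0 1 0 (by norm_num) (by norm_num) (by omega) (by omega))
  rw [hu1, hu2] at h12 h21
  have hsum12 : a1 + a2 = 3 := by
    by_contra hno
    exact L_nodigs b1 b2 a1 a2 ha1 ha2 hno ⟨h12, h21⟩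
  have hsum12' : (π (4*0+0+1) - 1) % 4 + (π (4*0+1+1) - 1) % 4 = 3 := by
    rw [hu1, hu2]; omega
  obtain ⟨c, hc2, hca2⟩ : ∃ c, c < 2 ∧ (π (4*0+c+1) - 1) % 4 < 2 := by
    rcases Nat.lt_or_ge ((π (4*0+0+1) - 1) % 4) 2 with h | h
    · exact ⟨0, by norm_num, h⟩
    · exact ⟨1, by norm_num, by omega⟩
  obtain ⟨a, hadef⟩ : ∃ a, (π (4*0+c+1) - 1) % 4 = a := ⟨_, rfl⟩
  obtain ⟨a', ha'def⟩ : ∃ a', (π (4*0+(3-c)+1) - 1) % 4 = a' := ⟨_, rfl⟩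
  rw [hadef] at hca2
  have ha'4 : a' < 4 := by omega
  -- residues are constant on classes
  have ralla : ∀ b, b < m → (π (4*b+c+1) - 1) % 4 = a := by
    intro b hb
    have := hres b 0 c hb hm0 (by omega)
    rw [hadef] at this
    exact this
  have rall' : ∀ b, b < m → (π (4*b+(3-c)+1) - 1) % 4 = a' := by
    intro b hb
    have := hres b 0 (3-c) hb hm0 (by omega)
    rw [ha'def] at this
    exact this
  -- block maps
  have hφex : ∀ b, ∃ u, b < m → (u < m ∧ π (4*b+c+1) = 4*u + a + 1) := by
    intro b
    by_cases hb : b < m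
    · obtain ⟨bb, cc, hbb, hcc, hco⟩ := hdec _ (hbij.mapsTo (hmem b c hb (by omega)))
      have hr := ralla b hb
      exact ⟨bb, fun _ => ⟨hbb, by rw [hco]; rw [hco] at hr; omega⟩⟩
    · exact ⟨0, fun h => absurd h hb⟩
  have hψex : ∀ b, ∃ u, b < m → (u < m ∧ π (4*b+(3-c)+1) = 4*u + a' + 1) := by
    intro b
    by_cases hb : b < m
    · obtain ⟨bb, cc, hbb, hcc, hco⟩ := hdec _ (hbij.mapsTo (hmem b (3-c) hb (by omega)))
      have hr := rall' b hb
      exact ⟨bb, fun _ => ⟨hbb, by rw [hco]; rw [hco] at hr; omega⟩⟩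
    · exact ⟨0, fun h => absurd h hb⟩
  choose φ hφ using hφex
  choose ψ hψ using hψex
  have hφinj : ∀ b < m, ∀ b' < m, φ b = φ b' → b = b' := by
    intro b hb b' hb' he
    have h1 := (hφ b hb).2
    have h2 := (hφ b' hb').2
    have : π (4*b+c+1) = π (4*b'+c+1) := by rw [h1, h2, he]
    have := hbij.injOn (hmem b c hb (by omega)) (hmem b' c hb' (by omega)) this
    omega
  have hψinj : ∀ b < m, ∀ b' < m, ψ b = ψ b' → b = b' := by
    intro b hb b' hb' he
    have h1 := (hψ b hb).2
    have h2 := (hψ b' hb').2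
    have : π (4*b+(3-c)+1) = π (4*b'+(3-c)+1) := by rw [h1, h2, he]
    have := hbij.injOn (hmem b (3-c) hb (by omega)) (hmem b' (3-c) hb' (by omega)) this
    omega
  have hφsurj := surj_of_inj m φ (fun b hb => (hφ b hb).1) hφinj
  -- Step 3 : determine a'
  have hstep3 : a' = a + 2 := by
    have hadj : Ep (Ment (4*0+c+1) (4*0+(3-c)+1)) := (L_crossP 0 0 c hc2).mpr (by norm_num)
    have hadj' : Ep (Ments (π (4*0+c+1)) (π (4*0+(3-c)+1))) :=
      (hE 0 c 0 (3-c) hm0 (by omega) hm0 (by omega)).mp hadj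
    rw [(hφ 0 hm0).2, (hψ 0 hm0).2] at hadj'
    have hres3 := L_adjs_res (φ 0) (ψ 0) a a' (by omega) ha'4 hadj'
    -- exclude a + a' = 3
    have hne3 : a + a' ≠ 3 := by
      intro hs3
      -- vertices (0, 1-c) and (0, 3-c) are non-adjacent in C_p, but images share a class
      obtain ⟨bi, ci, hbi, hci, hic⟩ :=
        hdec (π (4*0+(1-c)+1)) (hbij.mapsTo (hmem 0 (1-c) hm0 (by omega)))
      have hci3 : ci = 3 - a := by
        have h5 : (π (4*0+(1-c)+1) - 1) % 4 = 3 - a := by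
          interval_cases c
          · have e0 : (4*0+(1-0)+1) = (4*0+1+1) := by norm_num
            rw [e0]
            omega
          · have e0 : (4*0+(1-1)+1) = (4*0+0+1) := by norm_num
            rw [e0]
            omega
        rw [hic] at h5
        omega
      have hj' := (hψ 0 hm0).2
      have hno1 : ¬ Ep (Ments (π (4*0+(1-c)+1)) (π (4*0+(3-c)+1))) := by
        intro h
        exact L_noadjP 0 0 (1-c) (3-c) (by omega) (by omega) (by omega) (by omega)
          ((hE 0 (1-c) 0 (3-c) hm0 (by omega) hm0 (by omega)).mpr h)
      have hno2 : ¬ Ep (Ments (π (4*0+(3-c)+1)) (π (4*0+(1-c)+1))) := by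
        intro h
        exact L_noadjP 0 0 (3-c) (1-c) (by omega) (by omega) (by omega) (by omega)
          ((hE 0 (3-c) 0 (1-c) hm0 (by omega) hm0 (by omega)).mpr h)
      have hj'' : π (4*0+(3-c)+1) = 4*(ψ 0) + (3-a) + 1 := by rw [hj']; omega
      rw [hic, hci3, hj''] at hno1 hno2
      rcases eq_or_ne bi (ψ 0) with rfl | hbne
      · -- same vertex : contradiction with injectivity
        have : π (4*0+(1-c)+1) = π (4*0+(3-c)+1) := by rw [hic, hj'']; omega
        have := hbij.injOn (hmem 0 (1-c) hm0 (by omega)) (hmem 0 (3-c) hm0 (by omega)) this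
        omega
      · rw [L_intras bi (ψ 0) (3-a) (by omega)] at hno1
        rw [L_intras (ψ 0) bi (3-a) (by omega)] at hno2
        have hd : ((ψ 0 : ℤ) - (bi:ℤ)) ≠ 0 := by
          intro h
          exact hbne (by omega)
        have ht := S_tourn _ hd
        rw [show -((ψ 0:ℤ)-(bi:ℤ)) = (bi:ℤ)-((ψ 0:ℤ)) by ring] at ht
        exact hno1 (ht.mpr hno2)
    -- exclude a' = a
    have hnea : a' ≠ a := by
      intro hsa
      obtain ⟨b, hb, hfb⟩ := hφsurj (ψ 0) (hψ 0 hm0).1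
      have : π (4*b+c+1) = π (4*0+(3-c)+1) := by
        rw [(hφ b hb).2, (hψ 0 hm0).2, hfb, hsa]
      have := hbij.injOn (hmem b c hb (by omega)) (hmem 0 (3-c) hm0 (by omega)) this
      omega
    omega
  -- Step 4 : structural properties of φ and ψ
  have Fcross : ∀ b < m, ∀ b' < m,
      ((2:ℤ) ∣ ((b':ℤ)-(b:ℤ)) ↔ ¬ (2:ℤ) ∣ ((ψ b' : ℤ) - (φ b : ℤ))) := by
    intro b hb b' hb'
    have h1 := L_crossP b b' c hc2
    have h2 := hE b c b' (3-c) hb (by omega) hb' (by omega)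
    have h3 : π (4*b'+(3-c)+1) = 4*(ψ b') + (a+2) + 1 := by
      rw [(hψ b' hb').2, hstep3]
    rw [(hφ b hb).2, h3] at h2
    rw [L_crosss (φ b) (ψ b') a (by omega)] at h2
    exact h1.symm.trans h2
  have Fintraφ : ∀ b < m, ∀ b' < m,
      (S ((b':ℤ)-(b:ℤ)) ↔ S ((φ b : ℤ) - (φ b' : ℤ))) := by
    intro b hb b' hb'
    have h1 := L_intra b b' c (by omega)
    have h2 := hE b c b' c hb (by omega) hb' (by omega)
    rw [(hφ b hb).2, (hφ b' hb').2] at h2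
    rw [L_intras (φ b) (φ b') a (by omega)] at h2
    exact h1.symm.trans h2
  have Fintraψ : ∀ b < m, ∀ b' < m,
      (S ((b':ℤ)-(b:ℤ)) ↔ S ((ψ b : ℤ) - (ψ b' : ℤ))) := by
    intro b hb b' hb'
    have h1 := L_intra b b' (3-c) (by omega)
    have h2 := hE b (3-c) b' (3-c) hb (by omega) hb' (by omega)
    rw [(hψ b hb).2, (hψ b' hb').2] at h2
    rw [L_intras (ψ b) (ψ b') a' (by omega)] at h2
    exact h1.symm.trans h2
  -- Step 5 : build the parity-flipping automorphism θ
  have hθex : ∀ x, ∃ u, x < m → (u < m ∧ φ u = ψ x) := by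
    intro x
    by_cases hx : x < m
    · obtain ⟨u, hu, he⟩ := hφsurj (ψ x) (hψ x hx).1
      exact ⟨u, fun _ => ⟨hu, he⟩⟩
    · exact ⟨0, fun h => absurd h hx⟩
  choose θ hθ using hθex
  have hOdd : ∀ b < m, ¬ (2:ℤ) ∣ ((ψ b : ℤ) - (φ b : ℤ)) := by
    intro b hb
    exact (Fcross b hb b hb).mp (by simp)
  have hφpar : ∀ b < m, ∀ b' < m,
      ((2:ℤ) ∣ ((b':ℤ)-(b:ℤ)) ↔ (2:ℤ) ∣ ((φ b' : ℤ) - (φ b : ℤ))) := by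
    intro b hb b' hb'
    have h1 := Fcross b hb b' hb'
    have h2 := hOdd b' hb'
    omega
  have hθpar : ∀ x < m, ¬ (2:ℤ) ∣ ((θ x : ℤ) - (x : ℤ)) := by
    intro x hx hdvd
    have h1 := (hφpar x hx (θ x) (hθ x hx).1).mp hdvd
    rw [(hθ x hx).2] at h1
    exact hOdd x hx h1
  have hθaut : ∀ x < m, ∀ y < m, (S ((y:ℤ)-(x:ℤ)) ↔ S ((θ y : ℤ) - (θ x : ℤ))) := by
    intro x hx y hy
    have h1 := Fintraψ x hx y hy
    have h2 := Fintraφ (θ x) (hθ x hx).1 (θ y) (hθ y hy).1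
    rw [(hθ x hx).2, (hθ y hy).2] at h2
    exact h1.trans h2.symm
  have hθinj : ∀ x < m, ∀ y < m, θ x = θ y → x = y := by
    intro x hx y hy he
    have h1 := (hθ x hx).2
    have h2 := (hθ y hy).2
    exact hψinj x hx y hy (by rw [← h1, ← h2, he])
  exact no_parity_flip_auto m hm0 θ (fun x hx => (hθ x hx).1) hθinj hθpar hθaut
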